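/- arXiv:1509.01568 — 2 statements merged into one kernel-verified Lean document; each statement's English description precedes it below -/
import Mathlib

section
/- Let G be a group, 𝔤 = (g_1,…,g_n) a finite string of elements of G, ℰ = {E_1,…,E_m} a finite partition of G, and suppose a subsystem of Eq(𝔤,ℰ) consisting of n equations, encoded by n×ℓ (0,1)-matrices V and W (where ℓ = |Con(𝔤,ℰ)|), is normal and moreover satisfies ∑_{i=1}^n (W_i − V_i) = (1,1,…,1) (equivalently, α_C = 1 for every configuration C). Then the Tarski number of G satisfies τ(G) ≤ (ℓ−1)(2^n − 1). -/
namespace PaperStmt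

/-- A (0,1)-matrix: every entry is 0 or 1. -/
def ZeroOneMat {α β : Type*} (M : Matrix α β ℝ) : Prop := ∀ i j, M i j = 0 ∨ M i j = 1

/-- The lower-triangular matrix `T` with all entries on and below the diagonal equal to 1. -/
def Tmat (n : ℕ) : Matrix (Fin n) (Fin n) ℝ := fun i j => if j ≤ i then 1 else 0

/-- The permutation matrix associated to a permutation `σ` (row `i` is `e_{σ i}`). -/
def permMat {n : ℕ} (σ : Equiv.Perm (Fin n)) : Matrix (Fin n) (Fin n) ℝ :=
  fun i j => if σ i = j then 1 else 0

/-- Cyclic successor on `Fin n`. -/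
def cycSucc {n : ℕ} (i : Fin n) : Fin n := ⟨(i.val + 1) % n, Nat.mod_lt _ i.pos⟩

/-- `M⁺`: the matrix `M` with its rows cyclically shifted up by one. -/
def shiftRows {n : ℕ} {ι : Type*} (M : Matrix (Fin n) ι ℝ) : Matrix (Fin n) ι ℝ :=
  fun i j => M (cycSucc i) j

/-- The system `(B - A) X = 0` is *normal* if there is a permutation matrix `P` such that
every entry of `T P (B - A) - P⁺ A` is an integer `≥ -1`. -/
def IsNormal {n : ℕ} {ι : Type*} (A B : Matrix (Fin n) ι ℝ) : Prop :=
  ∃ σ : Equiv.Perm (Fin n), ∀ (i : Fin n) (j : ι),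
    ∃ z : ℤ,
      (Tmat n * (permMat σ * (B - A)) - shiftRows (permMat σ) * A) i j = (z : ℝ) ∧ -1 ≤ z

end PaperStmt

open Pointwise

namespace PaperStmt

/-- A group admits a paradoxical decomposition: there are pairwise disjoint subsets
`A 1, …, A p, B 1, …, B q` and group elements `s i`, `t j` such that the translates
`s i • A i` partition `G` and the translates `t j • B j` partition `G`. -/
def IsParadoxical (G : Type*) [Group G] : Prop :=
  ∃ (p q : ℕ), 0 < p ∧ 0 < q ∧
    ∃ (A : Fin p → Set G) (B : Fin q → Set G) (s : Fin p → G) (t : Fin q → G),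
      (∀ i i', i ≠ i' → Disjoint (A i) (A i')) ∧
      (∀ j j', j ≠ j' → Disjoint (B j) (B j')) ∧
      (∀ i j, Disjoint (A i) (B j)) ∧
      (⋃ i, s i • A i) = Set.univ ∧
      (∀ i i', i ≠ i' → Disjoint (s i • A i) (s i' • A i')) ∧
      (⋃ j, t j • B j) = Set.univ ∧
      (∀ j j', j ≠ j' → Disjoint (t j • B j) (t j' • B j'))

/-- A finitely additive, left-invariant probability measure defined on all subsets of `G`
(the defining property of amenability for a discrete group). -/
def HasLeftInvariantMean (G : Type*) [Group G] : Prop :=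
  ∃ μ : Set G → ℝ,
    (∀ A : Set G, 0 ≤ μ A ∧ μ A ≤ 1) ∧
    μ Set.univ = 1 ∧
    (∀ A B : Set G, Disjoint A B → μ (A ∪ B) = μ A + μ B) ∧
    (∀ (g : G) (A : Set G), μ (g • A) = μ A)

/-- A *complete* paradoxical decomposition with `p + q` pieces: the pieces
`A 1, …, A p, B 1, …, B q` form a partition of `G`, and the translates
`s i • A i` and `t j • B j` each form a partition of `G`. -/
def IsCompleteParadox (G : Type*) [Group G] (p q : ℕ) : Prop :=
  ∃ (A : Fin p → Set G) (B : Fin q → Set G) (s : Fin p → G) (t : Fin q → G),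
    (∀ i i', i ≠ i' → Disjoint (A i) (A i')) ∧
    (∀ j j', j ≠ j' → Disjoint (B j) (B j')) ∧
    (∀ i j, Disjoint (A i) (B j)) ∧
    ((⋃ i, A i) ∪ (⋃ j, B j)) = Set.univ ∧
    (⋃ i, s i • A i) = Set.univ ∧
    (∀ i i', i ≠ i' → Disjoint (s i • A i) (s i' • A i')) ∧
    (⋃ j, t j • B j) = Set.univ ∧
    (∀ j j', j ≠ j' → Disjoint (t j • B j) (t j' • B j'))

/-- The Tarski number of a group: the least total number of pieces `p + q` over all
complete paradoxical decompositions of `G`, and `∞` if there is none. -/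
noncomputable def tarskiNumber (G : Type*) [Group G] : ℕ∞ :=
  sInf {N : ℕ∞ | ∃ p q : ℕ, N = ((p + q : ℕ) : ℕ∞) ∧ IsCompleteParadox G p q}

end PaperStmt

open Pointwise

namespace PaperStmt

/-- `E : Fin m → Set G` is a partition of `G`: pairwise disjoint with union all of `G`. -/
def IsPartition {G : Type*} {m : ℕ} (E : Fin m → Set G) : Prop :=
  (∀ i j, i ≠ j → Disjoint (E i) (E j)) ∧ (⋃ i, E i) = Set.univ

/-- `C = (c_0, …, c_n)` is a configuration for the pair `(g, E)`: there is `x ∈ E (c 0)`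
with `g i * x ∈ E (c i)` for `1 ≤ i ≤ n`. -/
def IsConfig {G : Type*} [Group G] {n m : ℕ} (g : Fin n → G) (E : Fin m → Set G)
    (C : Fin (n + 1) → Fin m) : Prop :=
  ∃ x : G, x ∈ E (C 0) ∧ ∀ i : Fin n, g i * x ∈ E (C i.succ)

/-- `x_0(C) = E_{c_0} ∩ ⋂_{j=1}^n g_j⁻¹ E_{c_j}`. -/
def xzero {G : Type*} [Group G] {n m : ℕ} (g : Fin n → G) (E : Fin m → Set G)
    (C : Fin (n + 1) → Fin m) : Set G :=
  E (C 0) ∩ ⋂ i : Fin n, (g i)⁻¹ • E (C i.succ)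

/-- The string `(g_0, g_1, …, g_n)` with `g_0 = e`. -/
def ghat {G : Type*} [Group G] {n : ℕ} (g : Fin n → G) : Fin (n + 1) → G := Fin.cons 1 g

/-- `x_j(C) = g_j • x_0(C)` for `0 ≤ j ≤ n` (with `g_0 = e`). -/
def xj {G : Type*} [Group G] {n m : ℕ} (g : Fin n → G) (E : Fin m → Set G)
    (C : Fin (n + 1) → Fin m) (j : Fin (n + 1)) : Set G :=
  ghat g j • xzero g E C

/-- The real-valued indicator of a proposition. -/
noncomputable def ind (P : Prop) : ℝ :=
  letI := Classical.propDecidable P; if P then 1 else 0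

/-- `f` is a solution of the system of configuration equations `Eq(g, E)`:
for all `1 ≤ i ≤ m` and `0 ≤ j, k ≤ n`,
`∑_{C : x_j(C) ⊆ E_i} f C = ∑_{C : x_k(C) ⊆ E_i} f C`. -/
def IsEqSolution {G : Type*} [Group G] {n m : ℕ} (g : Fin n → G) (E : Fin m → Set G)
    (f : {C : Fin (n + 1) → Fin m // IsConfig g E C} → ℝ) : Prop :=
  ∀ (i : Fin m) (j k : Fin (n + 1)),
    ∑ᶠ C ∈ {C : {C : Fin (n + 1) → Fin m // IsConfig g E C} | xj g E C.1 j ⊆ E i}, f C =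
    ∑ᶠ C ∈ {C : {C : Fin (n + 1) → Fin m // IsConfig g E C} | xj g E C.1 k ⊆ E i}, f C

end PaperStmt

/-!
Read pointwise, `W` and `V` say that `z` lies in `F t` resp. `F' t`, two sets determined by the
configuration of `z`, with `F' t = v t⁻¹ • F t` for an explicit `v t`. Put one token on every point
and run through the equations in the order `σ` given by normality: at step `r` every point of
`F' r` sends one of its tokens to `v r` times itself. Normality guarantees that a point of
`F' r` still holds a token at that moment, and `α_C = 1` that afterwards every point holds exactly
two. A token's history `S ⊆ {1, …, n}` determines the translation carrying its birth point to its
final position; sorting the two tokens of each point by history yields a complete paradoxical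
decomposition with `2 (2 ^ n - 1)` pieces. Finally `ℓ ≥ 3`: with at most two configurations, the
`t`-th summands of `α` at two points representing them would add up to `0` for every `t`, while
each of the two sums is `1`.
-/

namespace PaperStmt

section Normality

variable {n : ℕ} {ι : Type*}

lemma permMat_mul_apply (σ : Equiv.Perm (Fin n)) (M : Matrix (Fin n) ι ℝ) (i : Fin n) (c : ι) :
    (permMat σ * M) i c = M (σ i) c := by
  simp [Matrix.mul_apply, permMat]

lemma Tmat_mul_apply (M : Matrix (Fin n) ι ℝ) (i : Fin n) (c : ι) :
    (Tmat n * M) i c = ∑ k with k ≤ i, M k c := by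
  simp [Matrix.mul_apply, Tmat, Finset.sum_filter]

lemma shiftRows_mul_apply (P : Matrix (Fin n) (Fin n) ℝ) (M : Matrix (Fin n) ι ℝ) (i : Fin n)
    (c : ι) :
    (shiftRows P * M) i c = (P * M) (cycSucc i) c := rfl

lemma IsNormal.exists_perm {A B : Matrix (Fin n) ι ℝ} (h : IsNormal A B) :
    ∃ σ : Equiv.Perm (Fin n), ∀ i c,
      A (σ (cycSucc i)) c ≤ 1 + ∑ k with k ≤ i, (B (σ k) c - A (σ k) c) := by
  obtain ⟨σ, hσ⟩ := h
  refine ⟨σ, fun i c => ?_⟩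
  obtain ⟨z, hz, hz1⟩ := hσ i c
  simp only [Matrix.sub_apply, Tmat_mul_apply, shiftRows_mul_apply, permMat_mul_apply] at hz
  have : (-1 : ℝ) ≤ z := by exact_mod_cast hz1
  linarith

end Normality

section Partition

variable {G : Type*} {m : ℕ} {E : Fin m → Set G}

lemma IsPartition.eq_of_mem (hE : IsPartition E) {x : G} {i j : Fin m} (hi : x ∈ E i)
    (hj : x ∈ E j) : i = j := by
  by_contra hne
  exact Set.disjoint_left.mp (hE.1 i j hne) hi hj

noncomputable def IsPartition.cell (hE : IsPartition E) (x : G) : Fin m :=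
  (Set.mem_iUnion.mp (hE.2 ▸ Set.mem_univ x)).choose

lemma IsPartition.mem_cell (hE : IsPartition E) (x : G) : x ∈ E (hE.cell x) :=
  (Set.mem_iUnion.mp (hE.2 ▸ Set.mem_univ x)).choose_spec

end Partition

section Configurations

variable {G : Type*} [Group G] {n m : ℕ} (g : Fin n → G) {E : Fin m → Set G}

@[simp] lemma ghat_zero : ghat g 0 = 1 := rfl

@[simp] lemma ghat_succ (i : Fin n) : ghat g i.succ = g i := rfl

noncomputable def IsPartition.config (hE : IsPartition E) (z : G) :
    {C : Fin (n + 1) → Fin m // IsConfig g E C} :=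
  ⟨fun j => hE.cell (ghat g j * z), z, by simpa using hE.mem_cell z,
    fun i => by simpa using hE.mem_cell (g i * z)⟩

lemma IsPartition.config_apply (hE : IsPartition E) (z : G) (j : Fin (n + 1)) :
    (hE.config g z).1 j = hE.cell (ghat g j * z) := rfl

lemma xj_subset (C : Fin (n + 1) → Fin m) (j : Fin (n + 1)) : xj g E C j ⊆ E (C j) := by
  rintro _ ⟨x, ⟨hx0, hx⟩, rfl⟩
  induction j using Fin.cases with
  | zero => simpa using hx0
  | succ i => simpa [Set.mem_inv_smul_set_iff] using Set.mem_iInter.mp hx i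

lemma xzero_nonempty {C : Fin (n + 1) → Fin m} (hC : IsConfig g E C) :
    (xzero g E C).Nonempty := by
  obtain ⟨x, hx0, hx⟩ := hC
  exact ⟨x, hx0, Set.mem_iInter.mpr fun i => by simpa [Set.mem_inv_smul_set_iff] using hx i⟩

lemma xj_subset_iff (hE : IsPartition E) {C : Fin (n + 1) → Fin m} (hC : IsConfig g E C)
    (j : Fin (n + 1)) (i : Fin m) : xj g E C j ⊆ E i ↔ C j = i := by
  refine ⟨fun hsub => ?_, fun h => h ▸ xj_subset g C j⟩
  obtain ⟨x, hx⟩ := xzero_nonempty g hC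
  have hmem : ghat g j * x ∈ xj g E C j := ⟨x, hx, rfl⟩
  exact hE.eq_of_mem (xj_subset g C j hmem) (hsub hmem)

end Configurations

section Balance

variable {α : Type*} {n : ℕ} (F F' : Fin n → Set α)

/-- The number of tokens at `z` after the first `s` steps. -/
noncomputable def balance (s : ℕ) (z : α) : ℝ :=
  1 + ∑ k : Fin n with k.val < s, (ind (z ∈ F k) - ind (z ∈ F' k))

lemma balance_zero (z : α) : balance F F' 0 z = 1 := by
  simp [balance]

lemma balance_succ (r : Fin n) (z : α) :
    balance F F' (r + 1) z = balance F F' r z + (ind (z ∈ F r) - ind (z ∈ F' r)) := by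
  have hfilter : (Finset.univ.filter fun k : Fin n => k.val < r + 1) =
      insert r (Finset.univ.filter fun k : Fin n => k.val < r) := by
    ext k
    simp only [Finset.mem_filter, Finset.mem_insert, Finset.mem_univ, true_and, Fin.ext_iff]
    omega
  rw [balance, balance, hfilter, Finset.sum_insert (by simp)]
  ring

lemma balance_eq_of_le {s : ℕ} (hs : n ≤ s) (z : α) :
    balance F F' s z = 1 + ∑ k, (ind (z ∈ F k) - ind (z ∈ F' k)) := by
  rw [balance, Finset.filter_true_of_mem fun k _ => k.isLt.trans_le hs]

variable {F F'}

lemma one_le_balance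
    (h : ∀ i z, ind (z ∈ F' (cycSucc i)) ≤ 1 + ∑ k with k ≤ i, (ind (z ∈ F k) - ind (z ∈ F' k)))
    (r : Fin n) {y : α} (hy : y ∈ F' r) : 1 ≤ balance F F' r y := by
  obtain ⟨_ | i, hr⟩ := r
  · simp [balance_zero]
  have hcyc : cycSucc (⟨i, by omega⟩ : Fin n) = ⟨i + 1, hr⟩ :=
    Fin.ext (by simp [cycSucc, Nat.mod_eq_of_lt hr])
  have hfilter : (Finset.univ.filter fun k : Fin n => k ≤ ⟨i, by omega⟩) =
      Finset.univ.filter fun k : Fin n => k.val < i + 1 := by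
    ext k
    simp only [Finset.mem_filter, Finset.mem_univ, true_and, Fin.le_def]
    omega
  have hle := h ⟨i, by omega⟩ y
  rw [hcyc, hfilter] at hle
  simpa [ind, hy, balance] using hle

end Balance

section TwoToOne

variable {G ι : Type*} [Group G]

/-- `lab x` is the label (history) of the token born at `x`; that token sits at `δ (lab x) * x`. -/
def tokenPos (δ : ι → G) (lab : G → ι) (x : G) : G := δ (lab x) * x

variable {k : ℕ} (e : ι ≃ Fin (k + 1)) (δ : ι → G) (lab : G → ι)

def IsLowest (x : G) : Prop :=
  ∀ y, tokenPos δ lab y = tokenPos δ lab x → e (lab x) ≤ e (lab y)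

variable {e δ lab}

lemma eq_of_tokenPos_eq {x y : G} (hpos : tokenPos δ lab x = tokenPos δ lab y)
    (hlab : lab x = lab y) : x = y := by
  rw [tokenPos, tokenPos, hlab] at hpos
  exact mul_left_cancel hpos

lemma isLowest_and_not_isLowest_of_preimage_eq {z a b : G}
    (hfib : tokenPos δ lab ⁻¹' {z} = {a, b}) (hlt : e (lab a) < e (lab b)) :
    IsLowest e δ lab a ∧ ¬ IsLowest e δ lab b := by
  have hpos : ∀ w, tokenPos δ lab w = z ↔ w = a ∨ w = b := fun w => by
    simpa using Set.ext_iff.mp hfib w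
  have ha := (hpos a).mpr (.inl rfl)
  refine ⟨fun w hw => ?_, fun hlow => (hlow a (ha.trans ((hpos b).mpr (.inr rfl)).symm)).not_gt hlt⟩
  rcases (hpos w).mp (hw.trans ha) with rfl | rfl
  exacts [le_rfl, hlt.le]

lemma exists_isLowest_not_isLowest {z : G} (h2 : (tokenPos δ lab ⁻¹' {z}).ncard = 2) :
    ∃ x y, tokenPos δ lab ⁻¹' {z} = {x, y} ∧ IsLowest e δ lab x ∧ ¬ IsLowest e δ lab y := by
  obtain ⟨a, b, hab, hfib⟩ := Set.ncard_eq_two.mp h2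
  have ha : tokenPos δ lab a = z := (Set.ext_iff.mp hfib a).mpr (.inl rfl)
  have hb : tokenPos δ lab b = z := (Set.ext_iff.mp hfib b).mpr (.inr rfl)
  have hlab : e (lab a) ≠ e (lab b) := fun h =>
    hab (eq_of_tokenPos_eq (ha.trans hb.symm) (e.injective h))
  rcases hlab.lt_or_gt with hlt | hlt
  · exact ⟨a, b, hfib, isLowest_and_not_isLowest_of_preimage_eq hfib hlt⟩
  · rw [Set.pair_comm] at hfib
    exact ⟨b, a, hfib, isLowest_and_not_isLowest_of_preimage_eq hfib hlt⟩

lemma IsLowest.eq {x y : G} (hx : IsLowest e δ lab x) (hy : IsLowest e δ lab y)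
    (hpos : tokenPos δ lab x = tokenPos δ lab y) : x = y :=
  eq_of_tokenPos_eq hpos (e.injective (le_antisymm (hx y hpos.symm) (hy x hpos)))

lemma ne_zero_of_not_isLowest {x : G} (hx : ¬ IsLowest e δ lab x) : e (lab x) ≠ 0 := by
  simp only [IsLowest, not_forall, not_le] at hx
  obtain ⟨y, -, hy⟩ := hx
  exact Fin.ne_zero_of_lt hy

lemma IsLowest.ne_last {x : G} (h2 : (tokenPos δ lab ⁻¹' {tokenPos δ lab x}).ncard = 2)
    (hx : IsLowest e δ lab x) : e (lab x) ≠ Fin.last k := by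
  obtain ⟨_, y, hfib, -, hylow⟩ := exists_isLowest_not_isLowest h2
  have hy : tokenPos δ lab y = tokenPos δ lab x := (Set.ext_iff.mp hfib y).mpr (.inr rfl)
  have hxy : x ≠ y := fun h => hylow (h ▸ hx)
  refine Fin.ne_last_of_lt (lt_of_le_of_ne (hx y hy) fun h => hxy ?_)
  exact eq_of_tokenPos_eq hy.symm (e.injective h)

lemma eq_of_not_isLowest {x y : G} (h2 : (tokenPos δ lab ⁻¹' {tokenPos δ lab x}).ncard = 2)
    (hx : ¬ IsLowest e δ lab x) (hy : ¬ IsLowest e δ lab y)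
    (hpos : tokenPos δ lab x = tokenPos δ lab y) : x = y := by
  obtain ⟨a, b, hfib, ha, -⟩ := exists_isLowest_not_isLowest h2
  have hx' : x ∈ ({a, b} : Set G) := (Set.ext_iff.mp hfib x).mp rfl
  have hy' : y ∈ ({a, b} : Set G) := (Set.ext_iff.mp hfib y).mp hpos.symm
  rcases hx' with rfl | rfl
  · exact absurd ha hx
  rcases hy' with rfl | rfl
  · exact absurd ha hy
  · rfl

lemma mem_smul_setOf_lab_iff (j : Fin (k + 1)) (P : G → Prop) (z : G) :
    z ∈ δ (e.symm j) • {x | e (lab x) = j ∧ P x} ↔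
      ∃ x, tokenPos δ lab x = z ∧ e (lab x) = j ∧ P x := by
  simp only [Set.mem_smul_set, smul_eq_mul, tokenPos]
  constructor
  · rintro ⟨x, ⟨hj, hP⟩, rfl⟩
    exact ⟨x, by rw [← hj, e.symm_apply_apply], hj, hP⟩
  · rintro ⟨x, rfl, hj, hP⟩
    exact ⟨x, ⟨hj, hP⟩, by rw [← hj, e.symm_apply_apply]⟩

end TwoToOne

/-- Split every fiber of the two-to-one map `tokenPos δ lab` into its point of lower label
(an `A`-piece) and its point of higher label (a `B`-piece); a lowest label is never the last one
and the other label never the first, so `k` pieces of each kind suffice. -/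
theorem isCompleteParadox_of_ncard_fiber_eq_two {G ι : Type*} [Group G] {k : ℕ}
    (e : ι ≃ Fin (k + 1)) {δ : ι → G} {lab : G → ι}
    (h2 : ∀ z, (tokenPos δ lab ⁻¹' {z}).ncard = 2) : IsCompleteParadox G k k := by
  refine ⟨fun a => {x | e (lab x) = a.castSucc ∧ IsLowest e δ lab x},
    fun b => {x | e (lab x) = b.succ ∧ ¬ IsLowest e δ lab x},
    fun a => δ (e.symm a.castSucc), fun b => δ (e.symm b.succ), ?_, ?_, ?_, ?_, ?_, ?_, ?_, ?_⟩
  · exact fun a a' hne => Set.disjoint_left.mpr fun x hx hx' =>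
      hne (Fin.castSucc_injective _ (hx.1.symm.trans hx'.1))
  · exact fun b b' hne => Set.disjoint_left.mpr fun x hx hx' =>
      hne (Fin.succ_injective _ (hx.1.symm.trans hx'.1))
  · exact fun a b => Set.disjoint_left.mpr fun x hx hx' => hx'.2 hx.2
  · refine Set.eq_univ_of_forall fun x => ?_
    by_cases hx : IsLowest e δ lab x
    · obtain ⟨a, ha⟩ := Fin.exists_castSucc_eq.mpr (hx.ne_last (h2 _))
      exact .inl (Set.mem_iUnion.mpr ⟨a, ha.symm, hx⟩)
    · obtain ⟨b, hb⟩ := Fin.exists_succ_eq.mpr (ne_zero_of_not_isLowest hx)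
      exact .inr (Set.mem_iUnion.mpr ⟨b, hb.symm, hx⟩)
  · refine Set.eq_univ_of_forall fun z => ?_
    obtain ⟨x, _, hfib, hlow, -⟩ := exists_isLowest_not_isLowest (h2 z)
    have hx : tokenPos δ lab x = z := (Set.ext_iff.mp hfib x).mpr (.inl rfl)
    obtain ⟨a, ha⟩ := Fin.exists_castSucc_eq.mpr (hlow.ne_last (hx ▸ h2 z))
    exact Set.mem_iUnion.mpr ⟨a, (mem_smul_setOf_lab_iff _ _ _).mpr ⟨x, hx, ha.symm, hlow⟩⟩
  · refine fun a a' hne => Set.disjoint_left.mpr fun z hz hz' => hne ?_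
    obtain ⟨x, hx, ha, hlow⟩ := (mem_smul_setOf_lab_iff _ _ _).mp hz
    obtain ⟨x', hx', ha', hlow'⟩ := (mem_smul_setOf_lab_iff _ _ _).mp hz'
    obtain rfl := hlow.eq hlow' (hx.trans hx'.symm)
    exact Fin.castSucc_injective _ (ha.symm.trans ha')
  · refine Set.eq_univ_of_forall fun z => ?_
    obtain ⟨_, y, hfib, -, hup⟩ := exists_isLowest_not_isLowest (h2 z)
    have hy : tokenPos δ lab y = z := (Set.ext_iff.mp hfib y).mpr (.inr rfl)
    obtain ⟨b, hb⟩ := Fin.exists_succ_eq.mpr (ne_zero_of_not_isLowest hup)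
    exact Set.mem_iUnion.mpr ⟨b, (mem_smul_setOf_lab_iff _ _ _).mpr ⟨y, hy, hb.symm, hup⟩⟩
  · refine fun b b' hne => Set.disjoint_left.mpr fun z hz hz' => hne ?_
    obtain ⟨y, hy, hb, hup⟩ := (mem_smul_setOf_lab_iff _ _ _).mp hz
    obtain ⟨y', hy', hb', hup'⟩ := (mem_smul_setOf_lab_iff _ _ _).mp hz'
    obtain rfl := eq_of_not_isLowest (h2 _) hup hup' (hy.trans hy'.symm)
    exact Fin.succ_injective _ (hb.symm.trans hb')

lemma finite_setOf_and_eq {α : Type*} (p : Prop) (a : α) : ({x | p ∧ x = a} : Set α).Finite :=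
  (Set.finite_singleton a).subset fun _ hx => hx.2

lemma ncard_setOf_and_eq {α : Type*} (p : Prop) (a : α) :
    (({x | p ∧ x = a} : Set α).ncard : ℝ) = ind p := by
  by_cases hp : p <;> simp [hp, ind]

section TokenProcess

variable {G : Type*} [Group G] {n : ℕ}

/-- The translation undergone by a token that moved exactly at the steps in `S`. -/
def travel (v : Fin n → G) (S : Finset (Fin n)) : G := ((S.sort (· ≥ ·)).map v).prod

lemma travel_insert (v : Fin n → G) {r : Fin n} {S : Finset (Fin n)} (hS : ∀ s ∈ S, s < r) :
    travel v (insert r S) = v r * travel v S := by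
  rw [travel, Finset.sort_insert _ (fun s hs => (hS s hs).le) fun hr => (hS r hr).false]
  simp [travel]

variable (F F' : Fin n → Set G) (v : Fin n → G)

noncomputable def pickToken (lab : G → Finset (Fin n)) (y : G) : G :=
  Classical.epsilon fun x => tokenPos (travel v) lab x = y

def IsPicked (r : Fin n) (lab : G → Finset (Fin n)) (x : G) : Prop :=
  tokenPos (travel v) lab x ∈ F' r ∧ x = pickToken v lab (tokenPos (travel v) lab x)

open scoped Classical in
noncomputable def relabel (r : Fin n) (lab : G → Finset (Fin n)) (x : G) : Finset (Fin n) :=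
  if IsPicked F' v r lab x then insert r (lab x) else lab x

noncomputable def history : Fin (n + 1) → G → Finset (Fin n) :=
  Fin.induction (fun _ => ∅) fun r lab => relabel F' v r lab

lemma history_zero : history F' v 0 = fun _ => ∅ := Fin.induction_zero ..

lemma history_succ (r : Fin n) :
    history F' v r.succ = relabel F' v r (history F' v r.castSucc) := Fin.induction_succ ..

lemma castSucc_lt_of_mem_history {s : Fin (n + 1)} {x : G} {k : Fin n}
    (hk : k ∈ history F' v s x) : k.castSucc < s := by
  induction s using Fin.induction generalizing k with
  | zero => simp [history_zero] at hk
  | succ r ih =>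
    rw [history_succ, relabel] at hk
    split_ifs at hk
    · rcases Finset.mem_insert.mp hk with rfl | hk
      exacts [Fin.castSucc_lt_succ, (ih hk).trans Fin.castSucc_lt_succ]
    · exact (ih hk).trans Fin.castSucc_lt_succ

lemma tokenPos_pickToken {lab : G → Finset (Fin n)} {y : G}
    (hy : ∃ x, tokenPos (travel v) lab x = y) :
    tokenPos (travel v) lab (pickToken v lab y) = y :=
  Classical.epsilon_spec hy

variable {F F' v} {r : Fin n} {lab : G → Finset (Fin n)}

lemma tokenPos_relabel_of_isPicked (hlab : ∀ x, ∀ k ∈ lab x, k < r) {x : G}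
    (hx : IsPicked F' v r lab x) :
    tokenPos (travel v) (relabel F' v r lab) x = v r * tokenPos (travel v) lab x := by
  rw [tokenPos, relabel, if_pos hx, travel_insert v (hlab x), mul_assoc, tokenPos]

lemma tokenPos_relabel_of_not_isPicked {x : G} (hx : ¬ IsPicked F' v r lab x) :
    tokenPos (travel v) (relabel F' v r lab) x = tokenPos (travel v) lab x := by
  rw [tokenPos, relabel, if_neg hx, tokenPos]

lemma isPicked_iff_of_tokenPos_eq {x z : G} (hx : tokenPos (travel v) lab x = z) :
    IsPicked F' v r lab x ↔ z ∈ F' r ∧ x = pickToken v lab z := by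
  rw [IsPicked, hx]

lemma isPicked_pickToken (hF' : F' r = (v r * ·) ⁻¹' F r)
    (havail : ∀ y ∈ F' r, ∃ x, tokenPos (travel v) lab x = y) {z : G} (hz : z ∈ F r) :
    IsPicked F' v r lab (pickToken v lab ((v r)⁻¹ * z)) := by
  have hy : (v r)⁻¹ * z ∈ F' r := by simpa [hF'] using hz
  rw [isPicked_iff_of_tokenPos_eq (tokenPos_pickToken v (havail _ hy))]
  exact ⟨hy, rfl⟩

lemma preimage_tokenPos_relabel (hF' : F' r = (v r * ·) ⁻¹' F r)
    (hlab : ∀ x, ∀ k ∈ lab x, k < r)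
    (havail : ∀ y ∈ F' r, ∃ x, tokenPos (travel v) lab x = y) (z : G) :
    tokenPos (travel v) (relabel F' v r lab) ⁻¹' {z} =
      (tokenPos (travel v) lab ⁻¹' {z} \ {x | IsPicked F' v r lab x}) ∪
        {x | z ∈ F r ∧ x = pickToken v lab ((v r)⁻¹ * z)} := by
  ext x
  simp only [Set.mem_union, Set.mem_sdiff, Set.mem_preimage, Set.mem_singleton_iff,
    Set.mem_ofPred_eq]
  by_cases hx : IsPicked F' v r lab x
  · rw [tokenPos_relabel_of_isPicked hlab hx]
    simp only [hx, not_true_eq_false, and_false, false_or]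
    constructor
    · rintro rfl
      exact ⟨by simpa [hF'] using hx.1, by simpa using hx.2⟩
    · rintro ⟨hz, rfl⟩
      rw [tokenPos_pickToken v (havail _ (by simpa [hF'] using hz)), mul_inv_cancel_left]
  · rw [tokenPos_relabel_of_not_isPicked hx]
    simp only [hx, not_false_eq_true, and_true]
    refine ⟨.inl, ?_⟩
    rintro (h | ⟨hz, rfl⟩)
    exacts [h, absurd (isPicked_pickToken hF' havail hz) hx]

lemma ncard_preimage_tokenPos_relabel (hF' : F' r = (v r * ·) ⁻¹' F r)
    (hlab : ∀ x, ∀ k ∈ lab x, k < r)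
    (havail : ∀ y ∈ F' r, ∃ x, tokenPos (travel v) lab x = y) {z : G}
    (hfin : (tokenPos (travel v) lab ⁻¹' {z}).Finite) :
    ((tokenPos (travel v) (relabel F' v r lab) ⁻¹' {z}).ncard : ℝ) =
      (tokenPos (travel v) lab ⁻¹' {z}).ncard + (ind (z ∈ F r) - ind (z ∈ F' r)) := by
  have hinter : tokenPos (travel v) lab ⁻¹' {z} ∩ {x | IsPicked F' v r lab x} =
      {x | z ∈ F' r ∧ x = pickToken v lab z} := by
    ext x
    constructor
    · rintro ⟨hx, hpick⟩
      exact (isPicked_iff_of_tokenPos_eq hx).mp hpick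
    · rintro ⟨hz, rfl⟩
      have hpos := tokenPos_pickToken v (havail z hz)
      exact ⟨hpos, (isPicked_iff_of_tokenPos_eq hpos).mpr ⟨hz, rfl⟩⟩
  have hdisj : Disjoint (tokenPos (travel v) lab ⁻¹' {z} \ {x | IsPicked F' v r lab x})
      {x | z ∈ F r ∧ x = pickToken v lab ((v r)⁻¹ * z)} :=
    Set.disjoint_left.mpr fun x hx hq => hx.2 (hq.2 ▸ isPicked_pickToken hF' havail hq.1)
  have hcount := Set.ncard_inter_add_ncard_sdiff_eq_ncard (tokenPos (travel v) lab ⁻¹' {z})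
    {x | IsPicked F' v r lab x} hfin
  rw [preimage_tokenPos_relabel hF' hlab havail,
    Set.ncard_union_eq hdisj hfin.sdiff (finite_setOf_and_eq _ _), ← hcount, hinter]
  push_cast
  rw [ncard_setOf_and_eq, ncard_setOf_and_eq]
  ring

theorem finite_and_ncard_preimage_tokenPos_history (hF' : ∀ r, F' r = (v r * ·) ⁻¹' F r)
    (hsupply : ∀ r : Fin n, ∀ y ∈ F' r, 1 ≤ balance F F' r y) (s : Fin (n + 1)) (z : G) :
    (tokenPos (travel v) (history F' v s) ⁻¹' {z}).Finite ∧
      ((tokenPos (travel v) (history F' v s) ⁻¹' {z}).ncard : ℝ) = balance F F' s z := by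
  induction s using Fin.induction generalizing z with
  | zero =>
    have hfib : tokenPos (travel v) (history F' v 0) ⁻¹' {z} = {z} := by
      ext x
      simp [history_zero, tokenPos, travel]
    simp [hfib, balance_zero]
  | succ r ih =>
    have hlab : ∀ x, ∀ k ∈ history F' v r.castSucc x, k < r := fun x k hk =>
      Fin.castSucc_lt_castSucc_iff.mp (castSucc_lt_of_mem_history F' v hk)
    have havail : ∀ y ∈ F' r, ∃ x, tokenPos (travel v) (history F' v r.castSucc) x = y := by
      intro y hy
      have hpos : (0 : ℝ) < (tokenPos (travel v) (history F' v r.castSucc) ⁻¹' {y}).ncard := by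
        rw [(ih y).2]
        exact one_pos.trans_le (hsupply r y hy)
      exact Set.nonempty_of_ncard_ne_zero (by exact_mod_cast hpos.ne')
    rw [history_succ]
    refine ⟨?_, ?_⟩
    · rw [preimage_tokenPos_relabel (hF' r) hlab havail]
      exact (ih z).1.sdiff.union (finite_setOf_and_eq _ _)
    · rw [ncard_preimage_tokenPos_relabel (hF' r) hlab havail (ih z).1, (ih z).2, Fin.val_succ,
        balance_succ, Fin.val_castSucc]

theorem isCompleteParadox_of_balance (hF' : ∀ r, F' r = (v r * ·) ⁻¹' F r)
    (hsupply : ∀ r : Fin n, ∀ y ∈ F' r, 1 ≤ balance F F' r y)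
    (hsum : ∀ z, ∑ r, (ind (z ∈ F r) - ind (z ∈ F' r)) = 1) :
    IsCompleteParadox G (2 ^ n - 1) (2 ^ n - 1) := by
  have hcard : Fintype.card (Finset (Fin n)) = 2 ^ n - 1 + 1 := by
    simp [Nat.sub_add_cancel Nat.one_le_two_pow]
  refine isCompleteParadox_of_ncard_fiber_eq_two (Fintype.equivFinOfCardEq hcard)
    (δ := travel v) (lab := history F' v (Fin.last n)) fun z => ?_
  have h := (finite_and_ncard_preimage_tokenPos_history hF' hsupply (Fin.last n) z).2
  rw [Fin.val_last, balance_eq_of_le F F' le_rfl, hsum] at h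
  exact_mod_cast h.trans one_add_one_eq_two

end TokenProcess

section ThreeConfigurations

variable {α κ : Type*}

lemma ind_add_ind_eq_of_iff {a b a' b' : Prop} (hand : a ∧ b ↔ a' ∧ b')
    (hnor : ¬ a ∧ ¬ b ↔ ¬ a' ∧ ¬ b') : ind a + ind b = ind a' + ind b' := by
  unfold ind
  split_ifs <;> simp_all

lemma exists_forall_eq_or_eq_of_card_le_two [Finite κ] [Nonempty α] (c : α → κ)
    (h : Nat.card κ ≤ 2) : ∃ z₁ z₂, ∀ z, c z = c z₁ ∨ c z = c z₂ := by
  obtain ⟨z₁⟩ := ‹Nonempty α›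
  by_cases hall : ∀ z, c z = c z₁
  · exact ⟨z₁, z₁, fun z => .inl (hall z)⟩
  obtain ⟨z₂, hz₂⟩ := not_forall.mp hall
  refine ⟨z₁, z₂, fun z => ?_⟩
  by_contra! hz
  have := Fintype.ofFinite κ
  rw [Nat.card_eq_fintype_card] at h
  exact h.not_gt (Fintype.two_lt_card_iff.mpr
    ⟨c z₁, c z₂, c z, Ne.symm hz₂, fun h => hz.1 h.symm, fun h => hz.2 h.symm⟩)

variable {c : α → κ} {z₁ z₂ : α}

lemma mem_and_mem_iff_preimage_eq_univ (hc : ∀ z, c z = c z₁ ∨ c z = c z₂) (T : Set κ) :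
    c z₁ ∈ T ∧ c z₂ ∈ T ↔ c ⁻¹' T = Set.univ := by
  refine ⟨fun h => Set.eq_univ_of_forall fun z => ?_, fun h => ?_⟩
  · rcases hc z with hz | hz <;> simp [hz, h.1, h.2]
  · simp only [Set.eq_univ_iff_forall, Set.mem_preimage] at h
    exact ⟨h z₁, h z₂⟩

lemma not_mem_and_not_mem_iff_preimage_eq_empty (hc : ∀ z, c z = c z₁ ∨ c z = c z₂)
    (T : Set κ) : c z₁ ∉ T ∧ c z₂ ∉ T ↔ c ⁻¹' T = ∅ := by
  rw [← Set.mem_compl_iff, ← Set.mem_compl_iff, mem_and_mem_iff_preimage_eq_univ hc,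
    Set.preimage_compl, Set.compl_univ_iff]

/-- When `c` takes at most two values, membership of `z₁` and `z₂` in a `c`-saturated set only
depends on whether the set is empty, everything, or neither, and a surjective preimage preserves
that. -/
lemma ind_add_ind_eq_of_preimage (hc : ∀ z, c z = c z₁ ∨ c z = c z₂) {T T' : Set κ}
    {f : α → α} (hf : Function.Surjective f) (hT : c ⁻¹' T' = f ⁻¹' (c ⁻¹' T)) :
    ind (c z₁ ∈ T) + ind (c z₂ ∈ T) = ind (c z₁ ∈ T') + ind (c z₂ ∈ T') := by
  apply ind_add_ind_eq_of_iff
  · rw [mem_and_mem_iff_preimage_eq_univ hc, mem_and_mem_iff_preimage_eq_univ hc, hT,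
      ← Set.preimage_univ (f := f), hf.preimage_injective.eq_iff, Set.preimage_univ]
  · rw [not_mem_and_not_mem_iff_preimage_eq_empty hc, not_mem_and_not_mem_iff_preimage_eq_empty hc,
      hT, ← Set.preimage_empty (f := f), hf.preimage_injective.eq_iff, Set.preimage_empty]

theorem two_lt_card_of_sum_ind_eq_one {ι : Type*} [Fintype ι] [Finite κ] [Nonempty α]
    (c : α → κ) (T T' : ι → Set κ) (f : ι → α → α) (hf : ∀ t, Function.Surjective (f t))
    (hT : ∀ t, c ⁻¹' T' t = f t ⁻¹' (c ⁻¹' T t))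
    (hsum : ∀ z, ∑ t, (ind (c z ∈ T t) - ind (c z ∈ T' t)) = 1) : 2 < Nat.card κ := by
  by_contra! h
  obtain ⟨z₁, z₂, hc⟩ := exists_forall_eq_or_eq_of_card_le_two c h
  have hzero : ∑ t, ((ind (c z₁ ∈ T t) - ind (c z₁ ∈ T' t)) +
      (ind (c z₂ ∈ T t) - ind (c z₂ ∈ T' t))) = 0 :=
    Finset.sum_eq_zero fun t _ => by linarith [ind_add_ind_eq_of_preimage hc (hf t) (hT t)]
  rw [Finset.sum_add_distrib, hsum, hsum] at hzero
  norm_num at hzero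

end ThreeConfigurations

/-- If a subsystem of `Eq(g, E)` consisting of `n` equations, encoded by `n × ℓ`
(0,1)-matrices `V`, `W` (where `ℓ = |Con(g, E)|`), is normal and moreover
`∑_i (W_i - V_i) = (1, 1, …, 1)`, then `τ(G) ≤ (ℓ - 1)(2 ^ n - 1)`. -/
theorem tarski_bound_of_normal {G : Type*} [Group G] {n m : ℕ}
    (g : Fin n → G) (E : Fin m → Set G) (hE : IsPartition E)
    (iT : Fin n → Fin m) (jT kT : Fin n → Fin (n + 1))
    (V W : Matrix (Fin n) {C : Fin (n + 1) → Fin m // IsConfig g E C} ℝ)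
    (hV : ∀ t C, V t C = ind (xj g E C.1 (kT t) ⊆ E (iT t)))
    (hW : ∀ t C, W t C = ind (xj g E C.1 (jT t) ⊆ E (iT t)))
    (hnorm : IsNormal V W)
    (hsum : ∀ C, ∑ i, (W i C - V i C) = 1) :
    tarskiNumber G ≤
      (((Nat.card {C : Fin (n + 1) → Fin m // IsConfig g E C} - 1) * (2 ^ n - 1) : ℕ) : ℕ∞) := by
  obtain ⟨σ, hσ⟩ := hnorm.exists_perm
  let Con := {C : Fin (n + 1) → Fin m // IsConfig g E C}
  set c : G → Con := hE.config g
  set T : Fin n → Set Con := fun t => {C | C.1 (jT t) = iT t}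
  set T' : Fin n → Set Con := fun t => {C | C.1 (kT t) = iT t}
  set v : Fin n → G := fun t => (ghat g (jT t))⁻¹ * ghat g (kT t)
  have hWT : ∀ t C, W t C = ind (C ∈ T t) := fun t C => by rw [hW, xj_subset_iff g hE C.2]; rfl
  have hVT : ∀ t C, V t C = ind (C ∈ T' t) := fun t C => by rw [hV, xj_subset_iff g hE C.2]; rfl
  have hvT : ∀ t, c ⁻¹' T' t = (v t * ·) ⁻¹' (c ⁻¹' T t) := fun t => by
    ext z
    simp [c, T, T', v, IsPartition.config_apply, mul_assoc]
  have hsumT : ∀ z, ∑ t, (ind (c z ∈ T t) - ind (c z ∈ T' t)) = 1 := fun z => by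
    simpa only [hWT, hVT] using hsum (c z)
  have hnormT : ∀ i z, ind (c z ∈ T' (σ (cycSucc i))) ≤
      1 + ∑ k with k ≤ i, (ind (c z ∈ T (σ k)) - ind (c z ∈ T' (σ k))) := fun i z => by
    simpa only [hWT, hVT] using hσ i (c z)
  have hpara : IsCompleteParadox G (2 ^ n - 1) (2 ^ n - 1) :=
    isCompleteParadox_of_balance (F := fun r => c ⁻¹' T (σ r)) (F' := fun r => c ⁻¹' T' (σ r))
      (v := fun r => v (σ r)) (fun r => hvT (σ r)) (fun r _ hy => one_le_balance hnormT r hy)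
      (fun z => (Equiv.sum_comp σ _).trans (hsumT z))
  have hcard : 2 < Nat.card {C : Fin (n + 1) → Fin m // IsConfig g E C} :=
    two_lt_card_of_sum_ind_eq_one c T T' (fun t => (v t * ·))
      (fun t => mul_left_surjective (v t)) hvT hsumT
  calc tarskiNumber G ≤ ((2 ^ n - 1 + (2 ^ n - 1) : ℕ) : ℕ∞) := sInf_le ⟨_, _, rfl, hpara⟩
    _ ≤ _ := by
      gcongr
      rw [← two_mul]
      exact Nat.mul_le_mul_right _ (by omega)

end PaperStmt
end

section
/- Let G be a group, 𝔤 a finite string of elements of G and ℰ a finite partition of G. If the graph Γ(G,𝔤,ℰ) contains vertices A = (a_C) and B = (b_C) with a directed edge from A to B such that a_C ∈ {0,1} and b_C − a_C > 0 for every C ∈ Con(𝔤,ℰ), then G admits a paradoxical decomposition. -/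
open Pointwise

open Pointwise

namespace PaperStmt

/-- There is a directed edge in the graph `Γ(G, g, E)` from the vertex `a` to the vertex `b`:
there is a family of `b C` pieces for each configuration `C`, pairwise disjoint, whose union is
`⊔_{C : a C ≠ 0} x_0(C)`, such that each piece assigned to `C` is a left translate of `x_0(C)`. -/
def ConfigEdge {G : Type*} [Group G] {n m : ℕ} (g : Fin n → G) (E : Fin m → Set G)
    (a b : {C : Fin (n + 1) → Fin m // IsConfig g E C} → ℕ) : Prop :=
  ∃ 𝒜 : (C : {C : Fin (n + 1) → Fin m // IsConfig g E C}) → Fin (b C) → Set G,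
    (∀ (C C' : {C : Fin (n + 1) → Fin m // IsConfig g E C}) (j : Fin (b C)) (j' : Fin (b C')),
      (Sigma.mk C j : Σ C : {C : Fin (n + 1) → Fin m // IsConfig g E C}, Fin (b C)) ≠
        Sigma.mk C' j' → Disjoint (𝒜 C j) (𝒜 C' j')) ∧
    (⋃ C, ⋃ j, 𝒜 C j) =
      (⋃ C ∈ {C : {C : Fin (n + 1) → Fin m // IsConfig g E C} | a C ≠ 0}, xzero g E C.1) ∧
    (∀ (C : {C : Fin (n + 1) → Fin m // IsConfig g E C}) (j : Fin (b C)),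
      ∃ h : G, xzero g E C.1 = h • 𝒜 C j)

end PaperStmt

/-! The sets `x₀(C)` partition `G`, and the edge exhibits one piece `𝒜 C 0` translating onto
each `x₀(C)`; these pieces give the first half of the decomposition. They all lie in the union
of the `x₀(C)` with `a C ≠ 0`, and since then `b C ≥ 2`, each of these `x₀(C)` is also a
translate of a second piece `𝒜 C 1`, disjoint from all first pieces. Cutting `𝒜 C' 1` along
the traces of the first pieces and translating back gives a second copy of `G`. -/

open Pointwise Set Function

namespace PaperStmt

section Paradoxical

variable {G : Type*} [Group G]

theorem isParadoxical_of_finite {ι κ : Type*} [Finite ι] [Finite κ]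
    (A : ι → Set G) (B : κ → Set G) (s : ι → G) (t : κ → G)
    (hA : Pairwise (Disjoint on A)) (hB : Pairwise (Disjoint on B))
    (hAB : ∀ i j, Disjoint (A i) (B j))
    (hsA : ⋃ i, s i • A i = univ) (hsA_disj : Pairwise (Disjoint on fun i ↦ s i • A i))
    (htB : ⋃ j, t j • B j = univ) (htB_disj : Pairwise (Disjoint on fun j ↦ t j • B j)) :
    IsParadoxical G := by
  obtain ⟨p, ⟨e⟩⟩ := Finite.exists_equiv_fin ι
  obtain ⟨q, ⟨f⟩⟩ := Finite.exists_equiv_fin κ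
  have : Nonempty ι := nonempty_of_nonempty_iUnion_eq_univ hsA
  have : Nonempty κ := nonempty_of_nonempty_iUnion_eq_univ htB
  refine ⟨p, q, Fin.pos_iff_nonempty.2 (e.nonempty_congr.1 ‹_›),
    Fin.pos_iff_nonempty.2 (f.nonempty_congr.1 ‹_›), A ∘ e.symm, B ∘ f.symm, s ∘ e.symm,
    t ∘ f.symm, hA.comp_of_injective e.symm.injective, hB.comp_of_injective f.symm.injective,
    fun i j ↦ hAB _ _, ?_, hsA_disj.comp_of_injective e.symm.injective, ?_,
    htB_disj.comp_of_injective f.symm.injective⟩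
  · exact (e.symm.surjective.iUnion_comp fun i ↦ s i • A i).trans hsA
  · exact (f.symm.surjective.iUnion_comp fun j ↦ t j • B j).trans htB

/-- The second decomposition: `s i * s' k` moves `(s' k)⁻¹ • (A i ∩ Y k) ⊆ A' k` onto
`X i ∩ s i • Y k`, and for fixed `i` these cover `X i` because `A i ⊆ ⋃ k, Y k`. -/
theorem isParadoxical_of_translates {ι κ : Type*} [Finite ι] [Finite κ]
    {X : ι → Set G} {Y : κ → Set G} {A : ι → Set G} {A' : κ → Set G}
    {s : ι → G} {s' : κ → G}
    (hX : Pairwise (Disjoint on X)) (hX_univ : ⋃ i, X i = univ) (hY : Pairwise (Disjoint on Y))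
    (hA : Pairwise (Disjoint on A)) (hA' : Pairwise (Disjoint on A'))
    (hAA' : ∀ i k, Disjoint (A i) (A' k))
    (hsA : ∀ i, s i • A i = X i) (hsA' : ∀ k, s' k • A' k = Y k)
    (hAY : ∀ i, A i ⊆ ⋃ k, Y k) : IsParadoxical G := by
  let B : ι × κ → Set G := fun p ↦ (s' p.2)⁻¹ • (A p.1 ∩ Y p.2)
  let t : ι × κ → G := fun p ↦ s p.1 * s' p.2
  have hB_sub (p : ι × κ) : B p ⊆ A' p.2 := by
    rw [← inv_smul_smul (s' p.2) (A' p.2), hsA']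
    exact smul_set_mono inter_subset_right
  have htB (p : ι × κ) : t p • B p = X p.1 ∩ s p.1 • Y p.2 := by
    simp only [t, B, mul_smul, smul_inv_smul, smul_set_inter, hsA]
  refine isParadoxical_of_finite A B s t hA ?_ (fun i p ↦ (hAA' i p.2).mono_right (hB_sub p))
    (by simpa only [hsA] using hX_univ) (by simpa only [hsA] using hX) ?_ ?_
  · rintro ⟨i, k⟩ ⟨i', k'⟩ hne
    obtain rfl | hk := eq_or_ne k k'
    · have hi : i ≠ i' := fun h ↦ hne (by rw [h])
      exact disjoint_smul_set.2 ((hA hi).mono inter_subset_left inter_subset_left)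
    · exact (hA' hk).mono (hB_sub _) (hB_sub _)
  · have hX_sub (i : ι) : X i ⊆ s i • ⋃ k, Y k := hsA i ▸ smul_set_mono (hAY i)
    simp only [htB, iUnion_prod', ← inter_iUnion, ← smul_set_iUnion,
      inter_eq_left.2 (hX_sub _), hX_univ]
  · rintro ⟨i, k⟩ ⟨i', k'⟩ hne
    simp only [onFun, htB]
    obtain rfl | hi := eq_or_ne i i'
    · have hk : k ≠ k' := fun h ↦ hne (by rw [h])
      exact (disjoint_smul_set.2 (hY hk)).mono inter_subset_right inter_subset_right
    · exact (hX hi).mono inter_subset_left inter_subset_left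

end Paradoxical

section Configurations

variable {G : Type*} [Group G] {n m : ℕ} (g : Fin n → G) {E : Fin m → Set G}

theorem mem_xzero_iff {C : Fin (n + 1) → Fin m} {x : G} :
    x ∈ xzero g E C ↔ x ∈ E (C 0) ∧ ∀ i, g i * x ∈ E (C i.succ) := by
  simp [xzero, mem_inv_smul_set_iff, smul_eq_mul]

theorem pairwise_disjoint_xzero (hE : Pairwise (Disjoint on E)) :
    Pairwise (Disjoint on xzero g E) := by
  intro C C' hne
  refine not_not.1 fun h ↦ hne ?_
  obtain ⟨x, hx, hx'⟩ := not_disjoint_iff.1 h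
  rw [mem_xzero_iff] at hx hx'
  funext j
  refine Fin.cases ?_ (fun i ↦ ?_) j
  · exact hE.eq (not_disjoint_iff.2 ⟨x, hx.1, hx'.1⟩)
  · exact hE.eq (not_disjoint_iff.2 ⟨_, hx.2 i, hx'.2 i⟩)

theorem iUnion_xzero (hE : ⋃ i, E i = univ) :
    ⋃ C : {C : Fin (n + 1) → Fin m // IsConfig g E C}, xzero g E C.1 = univ := by
  have hidx (y : G) : ∃ i, y ∈ E i := mem_iUnion.1 (hE ▸ mem_univ y)
  choose idx hidx using hidx
  refine eq_univ_of_forall fun x ↦ mem_iUnion.2 ?_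
  have hx : x ∈ xzero g E (Fin.cons (idx x) fun i ↦ idx (g i * x)) := by
    simp [mem_xzero_iff, hidx]
  exact ⟨⟨_, x, (mem_xzero_iff g).1 hx⟩, hx⟩

end Configurations

theorem edge_implies_paradoxical_general {G : Type*} [Group G] {n m : ℕ}
    (g : Fin n → G) (E : Fin m → Set G) (hE : IsPartition E)
    (a b : {C : Fin (n + 1) → Fin m // IsConfig g E C} → ℕ)
    (hedge : ConfigEdge g E a b)
    (hab : ∀ C, a C < b C) :
    IsParadoxical G := by
  obtain ⟨𝒜, h𝒜_disj, h𝒜_union, h𝒜_transl⟩ := hedge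
  choose h hh using h𝒜_transl
  have h𝒜 (C C') (j : Fin (b C)) (j' : Fin (b C')) (hne : C ≠ C' ∨ (j : ℕ) ≠ j') :
      Disjoint (𝒜 C j) (𝒜 C' j') :=
    h𝒜_disj C C' j j' fun he ↦ hne.elim (· (congrArg Sigma.fst he))
      (· (congrArg (fun σ : Σ C, Fin (b C) ↦ (σ.2 : ℕ)) he))
  have hX : Pairwise (Disjoint on fun C : {C // IsConfig g E C} ↦ xzero g E C.1) :=
    (pairwise_disjoint_xzero g hE.1).comp_of_injective Subtype.val_injective
  refine isParadoxical_of_translates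
    (A := fun C ↦ 𝒜 C ⟨0, (Nat.zero_le _).trans_lt (hab C)⟩)
    (A' := fun C : {C // 1 < b C} ↦ 𝒜 C.1 ⟨1, C.2⟩)
    hX (iUnion_xzero g hE.2) (hX.comp_of_injective Subtype.val_injective)
    (fun C C' hne ↦ h𝒜 _ _ _ _ (.inl hne))
    (fun C C' hne ↦ h𝒜 _ _ _ _ (.inl (Subtype.val_injective.ne hne)))
    (fun C C' ↦ h𝒜 _ _ _ _ (.inr zero_ne_one)) (fun C ↦ (hh C _).symm)
    (fun C ↦ (hh C.1 _).symm) fun C x hx ↦ ?_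
  have hx' : x ∈ ⋃ C, ⋃ j, 𝒜 C j := mem_iUnion₂.2 ⟨C, _, hx⟩
  rw [h𝒜_union] at hx'
  obtain ⟨D, hD, hxD⟩ := mem_iUnion₂.1 hx'
  have hbD : 1 < b D := (Nat.one_le_iff_ne_zero.2 hD).trans_lt (hab D)
  exact mem_iUnion.2 ⟨⟨D, hbD⟩, hxD⟩

/-- If the graph `Γ(G, g, E)` contains vertices `a = (a_C)` and `b = (b_C)` joined by a
directed edge from `a` to `b` with `a_C ∈ {0, 1}` and `b_C - a_C > 0` for every
configuration `C`, then `G` admits a paradoxical decomposition. -/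
theorem edge_implies_paradoxical {G : Type*} [Group G] {n m : ℕ}
    (g : Fin n → G) (E : Fin m → Set G) (hE : IsPartition E)
    (a b : {C : Fin (n + 1) → Fin m // IsConfig g E C} → ℕ)
    (hedge : ConfigEdge g E a b)
    (ha : ∀ C, a C ≤ 1) (hab : ∀ C, a C < b C) :
    IsParadoxical G :=
  edge_implies_paradoxical_general g E hE a b hedge hab

end PaperStmt
end
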